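/- Let X be a compact Kähler surface satisfying h^{2,0} = h^{0,2} = 0, b₁(X) even, and K = ∫_X n² > 0 for a Kähler class n. With c = √−1, define on each Gr_k^𝒲 A_ℝ the (−1)^k-symmetric bilinear form Q_k(x,y) = ((√−1)^k/2){(Cx, y)_{k−1} + (−1)^k (x, Cy)_{k−1}} where C is the Weil operator C|_{A^{p,q}} = (√−1)^{p−q}. Then each Hermitian form H_k(x,y) := Q_k(Cx, ȳ) is positive definite; in particular Q₂(x,y) = −∫_X x∪y is positive definite on H²_prim(X,ℝ), and (𝒲_•, ℱ^•, Q_•) is a graded polarized ℝ-mixed Hodge structure. -/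

import Mathlib

/-!
Since `n³ = 0`, the real form is `A_ℝ = {x · e^{√−1 n} | x̄ = x}`, and conjugation with respect
to it is `τ x = x̄ · e^{2√−1 n}`. So `τ` fixes `n + √−1 n²`, `n²` and the real primitive classes,
while `τ 1 = e^{2√−1 n} = 1 + 2√−1 n − 2n²` and `τ n = n + 2√−1 n²`.

On `Gr₁ = ⟨n + √−1 n², n²⟩` the Weil operator is a rotation and `Q₁` is the symplectic form with
`Q₁(n², n + √−1 n²) = K`, so `H₁(x, x) = (|a|² + |b|²) K`; likewise `H₄(a, a) = |a|² K`.
A primitive class is `x = u + √−1 v` with `u, v` real primitive, `n x = 0` makes the twist by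
`e^{2√−1 n}` invisible, and `x x̄ = u² + v²`, so `H₂` is positive by the Hodge index theorem.
Opposedness of `ℱ` and `τ ℱ` on each `Gr_k^𝒲` follows from the splitting `A = H⁰ ⊕ H² ⊕ H⁴`
and the values of `τ` above.
-/

open Submodule Complex ComplexOrder

theorem Submodule.mem_map_iff_of_involutive {M : Type*} [AddCommGroup M] [Module ℂ M]
    {f : M →ₛₗ[starRingEnd ℂ] M} (hf : Function.Involutive f) {S : Submodule ℂ M} {y : M} :
    y ∈ S.map f ↔ f y ∈ S :=
  ⟨fun ⟨x, hx, hxy⟩ => hxy ▸ (hf x).symm ▸ hx, fun h => ⟨f y, h, hf y⟩⟩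

theorem Submodule.map_restrictScalars_eq {M : Type*} [AddCommGroup M] [Module ℂ M]
    {f : M →ₗ[ℝ] M} {g : M →ₛₗ[starRingEnd ℂ] M} (hfg : ∀ x, f x = g x) (S : Submodule ℂ M) :
    (S.restrictScalars ℝ).map f = (S.map g).restrictScalars ℝ := by
  ext y
  simp [hfg]

theorem Submodule.span_pair_add_smul {R M : Type*} [CommRing R] [AddCommGroup M] [Module R M]
    (x y : M) (c : R) : span R {x + c • y, y} = span R {x, y} := by
  ext z
  simp only [mem_span_pair]
  constructor
  · rintro ⟨a, b, rfl⟩; exact ⟨a, a * c + b, by module⟩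
  · rintro ⟨a, b, rfl⟩; exact ⟨a, b - a * c, by module⟩

theorem Submodule.span_coe_sup {R S M : Type*} [CommSemiring R] [Semiring S] [Algebra R S]
    [AddCommMonoid M] [Module R M] [Module S M] [IsScalarTower R S M] (P Q : Submodule R M) :
    span S ((P ⊔ Q : Submodule R M) : Set M) = span S (P : Set M) ⊔ span S (Q : Set M) := by
  rw [← span_union, ← span_span_of_tower R S ((P : Set M) ∪ Q), span_union, span_eq, span_eq]

section Independent

variable {R M : Type*} [Ring R] [AddCommGroup M] [Module R M] {H0 H2 H4 : Submodule R M}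

theorem Submodule.disjoint_sup_left_of_indep
    (hindep : ∀ a ∈ H0, ∀ x ∈ H2, ∀ y ∈ H4, a + x + y = 0 → a = 0 ∧ x = 0 ∧ y = 0) :
    Disjoint (H0 ⊔ H2) H4 := by
  refine disjoint_def.mpr fun y hy hy4 => ?_
  obtain ⟨a, ha, x, hx, rfl⟩ := mem_sup.mp hy
  obtain ⟨rfl, rfl, -⟩ := hindep a ha x hx _ (neg_mem hy4) (add_neg_cancel _)
  simp

theorem Submodule.disjoint_sup_right_of_indep
    (hindep : ∀ a ∈ H0, ∀ x ∈ H2, ∀ y ∈ H4, a + x + y = 0 → a = 0 ∧ x = 0 ∧ y = 0) :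
    Disjoint H0 (H2 ⊔ H4) := by
  refine disjoint_def.mpr fun a ha hy => ?_
  obtain ⟨x, hx, z, hz, rfl⟩ := mem_sup.mp hy
  exact (hindep _ ha _ (neg_mem hx) _ (neg_mem hz) (by abel)).1

end Independent

/-- `F` and `G` induce opposed filtrations on the graded piece `V / V'`. -/
def OpposedOn {α : Type*} [Lattice α] (F G V V' : α) : Prop :=
  F ⊓ V ⊔ G ⊓ V ⊔ V' = V ∧ F ⊓ G ⊓ V ≤ V'

namespace OpposedOn

variable {α : Type*} [Lattice α] {F G V V' : α}

theorem of_le (hV' : V' ≤ V) (hspan : V ≤ F ⊓ V ⊔ G ⊓ V ⊔ V') (hdisj : F ⊓ G ⊓ V ≤ V') :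
    OpposedOn F G V V' :=
  ⟨le_antisymm (sup_le (sup_le inf_le_right inf_le_right) hV') hspan, hdisj⟩

theorem self (F G V : α) : OpposedOn F G V V := of_le le_rfl le_sup_right inf_le_right

theorem of_le_sup_left [IsModularLattice α] (hV' : V' ≤ V) (hspan : V ≤ F ⊔ V')
    (hdisj : F ⊓ G ⊓ V ≤ V') : OpposedOn F G V V' := by
  refine of_le hV' ?_ hdisj
  calc V ≤ V ⊓ (F ⊔ V') := le_inf le_rfl hspan
    _ = F ⊓ V ⊔ V' := by rw [← inf_sup_assoc_of_le F hV', inf_comm]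
    _ ≤ F ⊓ V ⊔ G ⊓ V ⊔ V' := sup_le_sup_right le_sup_left _

theorem of_le_sup_right [IsModularLattice α] (hV' : V' ≤ V) (hspan : V ≤ G ⊔ V')
    (hdisj : F ⊓ G ⊓ V ≤ V') : OpposedOn F G V V' := by
  refine of_le hV' ?_ hdisj
  calc V ≤ V ⊓ (G ⊔ V') := le_inf le_rfl hspan
    _ = G ⊓ V ⊔ V' := by rw [← inf_sup_assoc_of_le G hV', inf_comm]
    _ ≤ F ⊓ V ⊔ G ⊓ V ⊔ V' := sup_le_sup_right le_sup_right _

theorem restrictScalars {M : Type*} [AddCommGroup M] [Module ℂ M] {F G V V' : Submodule ℂ M}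
    (h : OpposedOn F G V V') :
    OpposedOn (F.restrictScalars ℝ) (G.restrictScalars ℝ) (V.restrictScalars ℝ)
      (V'.restrictScalars ℝ) := by
  refine ⟨?_, (restrictScalars_le ℝ).mpr h.2⟩
  simp only [← restrictScalars_inf, ← restrictScalars_sup, h.1]

end OpposedOn

namespace SurfaceMHS

variable {A : Type*} [CommRing A] [Algebra ℂ A]

/-- `exp (a n)`, for `n` with `n ^ 3 = 0`. -/
noncomputable def truncExp (n : A) (a : ℂ) : A := 1 + a • n + (a ^ 2 / 2) • (n * n)

theorem mul_truncExp {n x : A} (hx : x * (n * n) = 0) (a : ℂ) :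
    x * truncExp n a = x + a • (x * n) := by
  simp only [truncExp, mul_add, mul_one, mul_smul_comm, hx, smul_zero, add_zero]

theorem truncExp_mul_truncExp {n : A} (hn : n * (n * n) = 0) (a b : ℂ) :
    truncExp n a * truncExp n b = truncExp n (a + b) := by
  have hn4 : n * n * (n * n) = 0 := by rw [mul_assoc, hn, mul_zero]
  have hn3 : n * n * n = 0 := by rw [mul_assoc, hn]
  simp only [truncExp, add_mul, mul_add, one_mul, mul_one, smul_mul_assoc, mul_smul_comm,
    hn, hn3, hn4, smul_zero, add_zero]
  match_scalars <;> ring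

theorem truncExp_zero (n : A) : truncExp n 0 = 1 := by simp [truncExp]

def primitivePart (H2 : Submodule ℂ A) (n : A) : Submodule ℂ A :=
  H2 ⊓ LinearMap.ker (LinearMap.mulRight ℂ n)

theorem mem_primitivePart {H2 : Submodule ℂ A} {n x : A} :
    x ∈ primitivePart H2 n ↔ x ∈ H2 ∧ x * n = 0 := by
  simp [primitivePart]

section RealStructure

variable (σ : A →ₛₗ[starRingEnd ℂ] A) {n : A}

theorem map_truncExp (hσmul : ∀ x y, σ (x * y) = σ x * σ y) (hσ1 : σ 1 = 1) (hσn : σ n = n)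
    (a : ℂ) : σ (truncExp n a) = truncExp n (starRingEnd ℂ a) := by
  simp only [truncExp, map_add, map_smulₛₗ, hσmul, hσ1, hσn, map_div₀, map_pow, map_ofNat]

theorem map_mem_primitivePart (hσmul : ∀ x y, σ (x * y) = σ x * σ y) (hσn : σ n = n)
    {H2 : Submodule ℂ A} (hσH2 : ∀ x ∈ H2, σ x ∈ H2) {x : A} (hx : x ∈ primitivePart H2 n) :
    σ x ∈ primitivePart H2 n := by
  rw [mem_primitivePart] at hx ⊢
  exact ⟨hσH2 x hx.1, by rw [← hσn, ← hσmul, hx.2, map_zero]⟩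

theorem exists_eq_add_I_smul (hσσ : ∀ x, σ (σ x) = x) {S : Submodule ℂ A}
    (hS : ∀ x ∈ S, σ x ∈ S) {x : A} (hx : x ∈ S) :
    ∃ u ∈ S, ∃ v ∈ S, σ u = u ∧ σ v = v ∧ x = u + I • v := by
  refine ⟨(1 / 2 : ℂ) • (x + σ x), S.smul_mem _ (S.add_mem hx (hS x hx)),
    (I / 2) • (σ x - x), S.smul_mem _ (S.sub_mem (hS x hx) hx), ?_, ?_, ?_⟩
  · simp only [map_smulₛₗ, map_add, hσσ, map_div₀, map_one, map_ofNat]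
    rw [add_comm]
  · simp only [map_smulₛₗ, map_sub, hσσ, map_div₀, conj_I, map_ofNat]
    match_scalars <;> ring
  · rw [smul_smul]
    match_scalars <;> ring_nf <;> simp [I_sq]; ring

theorem add_I_smul_mul_map {u v : A} (hu : σ u = u) (hv : σ v = v) :
    (u + I • v) * σ (u + I • v) = u * u + v * v := by
  simp only [map_add, map_smulₛₗ, hu, hv, conj_I, add_mul, mul_add, smul_mul_assoc,
    mul_smul_comm, mul_comm v u]
  match_scalars <;> ring_nf; simp [I_sq]

theorem span_fixedPoints_inf (hσσ : ∀ x, σ (σ x) = x) {R : Submodule ℝ A}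
    (hR : ∀ x, x ∈ R ↔ σ x = x) {S : Submodule ℂ A} (hS : ∀ x ∈ S, σ x ∈ S) :
    span ℂ ((R ⊓ S.restrictScalars ℝ : Submodule ℝ A) : Set A) = S := by
  refine le_antisymm (span_le.mpr fun x hx => hx.2) fun x hx => ?_
  obtain ⟨u, hu, v, hv, hσu, hσv, rfl⟩ := exists_eq_add_I_smul σ hσσ hS hx
  exact add_mem (subset_span ⟨(hR u).mpr hσu, hu⟩)
    (smul_mem _ _ (subset_span ⟨(hR v).mpr hσv, hv⟩))

/-- The conjugation with respect to the real form `{x e' | σ x = x}`, when `e = e'²` and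
`σ e' = e'⁻¹`. -/
def twistedConj (e : A) : A →ₛₗ[starRingEnd ℂ] A := (LinearMap.mulRight ℂ e).comp σ

theorem twistedConj_apply (e x : A) : twistedConj σ e x = σ x * e := rfl

theorem twistedConj_truncExp_involutive (hσσ : ∀ x, σ (σ x) = x)
    (hσmul : ∀ x y, σ (x * y) = σ x * σ y) (hσ1 : σ 1 = 1) (hσn : σ n = n)
    (hn : n * (n * n) = 0) {a : ℂ} (ha : starRingEnd ℂ a = -a) :
    Function.Involutive (twistedConj σ (truncExp n a)) := fun x => by
  rw [twistedConj_apply, twistedConj_apply, hσmul, hσσ, mul_assoc,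
    map_truncExp σ hσmul hσ1 hσn, truncExp_mul_truncExp hn, ha, neg_add_cancel, truncExp_zero,
    mul_one]

theorem twistedConj_truncExp_apply {x : A} (hx : σ x * (n * n) = 0) (a : ℂ) :
    twistedConj σ (truncExp n a) x = σ x + a • (σ x * n) := by
  rw [twistedConj_apply, mul_truncExp hx]

theorem twistedConj_truncExp_self (hσn : σ n = n) (hn : n * (n * n) = 0) (a : ℂ) :
    twistedConj σ (truncExp n a) n = n + a • (n * n) := by
  rw [twistedConj_truncExp_apply σ (by rw [hσn, hn]), hσn]

theorem twistedConj_truncExp_sq (hσmul : ∀ x y, σ (x * y) = σ x * σ y) (hσn : σ n = n)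
    (hn : n * (n * n) = 0) (a : ℂ) : twistedConj σ (truncExp n a) (n * n) = n * n := by
  rw [twistedConj_truncExp_apply σ (by rw [hσmul, hσn, mul_assoc, hn, mul_zero]), hσmul, hσn,
    mul_assoc, hn, smul_zero, add_zero]

theorem twistedConj_truncExp_add_I_smul_sq (hσmul : ∀ x y, σ (x * y) = σ x * σ y)
    (hσn : σ n = n) (hn : n * (n * n) = 0) :
    twistedConj σ (truncExp n (2 * I)) (n + I • (n * n)) = n + I • (n * n) := by
  rw [map_add, map_smulₛₗ, twistedConj_truncExp_self σ hσn hn,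
    twistedConj_truncExp_sq σ hσmul hσn hn, conj_I]
  module

theorem twistedConj_truncExp_mem_sup {H2 H4 : Submodule ℂ A} (hn : n ∈ H2)
    (hσH2 : ∀ x ∈ H2, σ x ∈ H2) (hmul22 : ∀ x ∈ H2, ∀ y ∈ H2, x * y ∈ H4)
    (hmul24 : ∀ x ∈ H2, ∀ y ∈ H4, x * y = 0) (a : ℂ) {x : A} (hx : x ∈ H2) :
    twistedConj σ (truncExp n a) x ∈ H2 ⊔ H4 := by
  rw [twistedConj_truncExp_apply σ (hmul24 _ (hσH2 x hx) _ (hmul22 n hn n hn))]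
  exact add_mem (mem_sup_left (hσH2 x hx))
    (mem_sup_right (smul_mem _ _ (hmul22 _ (hσH2 x hx) n hn)))

end RealStructure

section Positivity

variable {n : A}

/-- The form `Q₁` of the nilpotent construction, from the pairing `p0 = (·,·)₀` and the Weil
operator `C`. -/
noncomputable def formQ₁ (p0 : A →ₗ[ℂ] A →ₗ[ℂ] ℂ) (C : A →ₗ[ℂ] A) : A →ₗ[ℂ] A →ₗ[ℂ] ℂ :=
  (I / 2) • (p0.comp C - p0.compl₂ C)

theorem weil_apply_sq {C : A →ₗ[ℂ] A} (hC10 : C n = I • n)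
    (hC01 : C (n + (2 * I) • (n * n)) = (-I) • (n + (2 * I) • (n * n))) :
    C (n * n) = -(n + I • (n * n)) := by
  rw [map_add, map_smul, hC10] at hC01
  have h : (2 * I) • C (n * n) = (2 * I) • -(n + I • (n * n)) := by
    rw [eq_sub_of_add_eq' hC01]
    match_scalars <;> ring_nf
  exact smul_right_injective A (by simp) h

theorem weil_apply_add_I_smul_sq {C : A →ₗ[ℂ] A} (hC10 : C n = I • n)
    (hC01 : C (n + (2 * I) • (n * n)) = (-I) • (n + (2 * I) • (n * n))) :
    C (n + I • (n * n)) = n * n := by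
  rw [map_add, map_smul, hC10, weil_apply_sq hC10 hC01, smul_neg, smul_add, smul_smul, I_mul_I]
  module

variable (p0 : A →ₗ[ℂ] A →ₗ[ℂ] ℂ) (C : A →ₗ[ℂ] A) {intg : A →ₗ[ℂ] ℂ} {K : ℝ}

theorem formQ₁_apply (hn : n * (n * n) = 0) (hintn : intg n = 0) (hK : intg (n * n) = K)
    (hp0 : ∀ x y : A, p0 (n * x) (n * y) = intg (x * (n * y)))
    (hC1 : C (n + I • (n * n)) = n * n) (hC2 : C (n * n) = -(n + I • (n * n))) (a b c d : ℂ) :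
    formQ₁ p0 C (a • (n + I • (n * n)) + b • (n * n)) (c • (n + I • (n * n)) + d • (n * n))
      = (b * c - a * d) * K := by
  have he1 : n + I • (n * n) = n * (1 + I • n) := by rw [mul_add, mul_one, mul_smul_comm]
  have p11 : p0 (n + I • (n * n)) (n + I • (n * n)) = 2 * I * K := by
    rw [he1, hp0, ← he1, add_mul, one_mul, smul_mul_assoc, mul_add, mul_smul_comm, hn]
    simp only [map_add, map_smul, hintn, hK, smul_eq_mul, smul_zero, add_zero]
    ring
  have p12 : p0 (n + I • (n * n)) (n * n) = K := by
    rw [he1, hp0, add_mul, one_mul, smul_mul_assoc, hn, smul_zero, add_zero, hK]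
  have p21 : p0 (n * n) (n + I • (n * n)) = K := by
    rw [he1, hp0, ← he1, mul_add, mul_smul_comm, hn, smul_zero, add_zero, hK]
  have p22 : p0 (n * n) (n * n) = 0 := by rw [hp0, hn, map_zero]
  generalize n + I • (n * n) = e₁ at *
  simp only [formQ₁, LinearMap.smul_apply, LinearMap.sub_apply, LinearMap.comp_apply,
    LinearMap.compl₂_apply, map_add, map_smul, hC1, hC2, map_neg, LinearMap.add_apply,
    LinearMap.neg_apply, smul_eq_mul, p11, p12, p21, p22]
  linear_combination (a * d - b * c) * K * I_mul_I

theorem formQ₁_weil_pos (hn : n * (n * n) = 0) (hintn : intg n = 0) (hK : intg (n * n) = K)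
    (hKpos : 0 < K) (hp0 : ∀ x y : A, p0 (n * x) (n * y) = intg (x * (n * y)))
    (hC1 : C (n + I • (n * n)) = n * n) (hC2 : C (n * n) = -(n + I • (n * n)))
    {τ : A →ₛₗ[starRingEnd ℂ] A} (hτ1 : τ (n + I • (n * n)) = n + I • (n * n))
    (hτ2 : τ (n * n) = n * n) {x : A} (hx : x ∈ span ℂ {n + I • (n * n), n * n}) (hx0 : x ≠ 0) :
    0 < formQ₁ p0 C (C x) (τ x) := by
  obtain ⟨a, b, rfl⟩ := mem_span_pair.mp hx
  have hCx : C (a • (n + I • (n * n)) + b • (n * n))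
      = (-b) • (n + I • (n * n)) + a • (n * n) := by
    rw [map_add, map_smul, map_smul, hC1, hC2]; module
  have hτx : τ (a • (n + I • (n * n)) + b • (n * n))
      = starRingEnd ℂ a • (n + I • (n * n)) + starRingEnd ℂ b • (n * n) := by
    rw [map_add, map_smulₛₗ, map_smulₛₗ, hτ1, hτ2]
  have hab : 0 < normSq a + normSq b := by
    by_contra! h
    have ha : a = 0 := normSq_eq_zero.mp (by linarith [normSq_nonneg a, normSq_nonneg b])
    have hb : b = 0 := normSq_eq_zero.mp (by linarith [normSq_nonneg a, normSq_nonneg b])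
    exact hx0 (by simp [ha, hb])
  rw [hCx, hτx, formQ₁_apply p0 C hn hintn hK hp0 hC1 hC2, neg_mul, sub_neg_eq_add,
    mul_conj, mul_conj, ← ofReal_add, ← ofReal_mul, zero_lt_real]
  exact mul_pos hab hKpos

variable (σ : A →ₛₗ[starRingEnd ℂ] A)

theorem neg_intg_mul_twistedConj_pos (hσσ : ∀ x, σ (σ x) = x)
    (hσmul : ∀ x y, σ (x * y) = σ x * σ y) (hσn : σ n = n) {H2 : Submodule ℂ A}
    (hσH2 : ∀ x ∈ H2, σ x ∈ H2)
    (hneg : ∀ x : A, σ x = x → x ∈ H2 → n * x = 0 → x ≠ 0 → intg (x * x) < 0)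
    {x : A} (hx : x ∈ H2) (hnx : n * x = 0) (hx0 : x ≠ 0) (a : ℂ) :
    0 < -intg (x * twistedConj σ (truncExp n a) x) := by
  have hpos : ∀ w ∈ primitivePart H2 n, σ w = w → w ≠ 0 → 0 < -intg (w * w) :=
    fun w hw hσw hw0 => by
      obtain ⟨hw2, hwn⟩ := mem_primitivePart.mp hw
      exact neg_pos.mpr (hneg w hσw hw2 (by rwa [mul_comm]) hw0)
  have hnonneg : ∀ w ∈ primitivePart H2 n, σ w = w → 0 ≤ -intg (w * w) := fun w hw hσw => by
    rcases eq_or_ne w 0 with rfl | hw0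
    · simp
    · exact (hpos w hw hσw hw0).le
  obtain ⟨u, hu, v, hv, hσu, hσv, rfl⟩ := exists_eq_add_I_smul σ hσσ
    (fun _ => map_mem_primitivePart σ hσmul hσn hσH2)
    (mem_primitivePart.mpr ⟨hx, by rwa [mul_comm]⟩)
  have hxn : (u + I • v) * σ (u + I • v) * n = 0 := by
    rw [mul_comm, ← mul_assoc, hnx, zero_mul]
  rw [twistedConj_apply, ← mul_assoc, mul_truncExp (by rw [← mul_assoc, hxn, zero_mul]), hxn,
    smul_zero, add_zero, add_I_smul_mul_map σ hσu hσv, map_add, neg_add]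
  rcases eq_or_ne u 0 with rfl | hu0
  · simpa using hpos v hv hσv (by rintro rfl; simp at hx0)
  · exact add_pos_of_pos_of_nonneg (hpos u hu hσu hu0) (hnonneg v hv hσv)

theorem intg_smul_one_mul_twistedConj (hσ1 : σ 1 = 1) (hn : n * (n * n) = 0)
    (hK : intg (n * n) = K) (a b : ℂ) :
    intg (a • 1 * (twistedConj σ (truncExp n b) (a • 1) * n ^ 2)) = (normSq a * K : ℝ) := by
  have hsq : truncExp n b * (n * n) = n * n := by
    rw [mul_comm, mul_truncExp (by rw [mul_assoc, hn, mul_zero]), mul_assoc, hn, smul_zero,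
      add_zero]
  simp only [twistedConj_apply, map_smulₛₗ, hσ1, smul_mul_assoc, one_mul, sq, hsq, smul_smul,
    mul_conj, hK, smul_eq_mul, ofReal_mul, RingHom.id_apply]

end Positivity

section Filtrations

variable {H0 H2 H4 : Submodule ℂ A} {n : A}

def hodgeFiltration (H0 H2 : Submodule ℂ A) (p : ℤ) : Submodule ℂ A :=
  if p ≤ 0 then ⊤ else if p = 1 then H0 ⊔ H2 else if p = 2 then H0 else ⊥

/-- The complexification `𝒲_k ⊗ ℂ` of the weight filtration. -/
def weightFiltration (H2 H4 : Submodule ℂ A) (n : A) (k : ℤ) : Submodule ℂ A :=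
  if k ≤ 0 then ⊥ else if k = 1 then span ℂ {n, n * n} else if k ≤ 3 then H2 ⊔ H4 else ⊤

theorem hodgeFiltration_of_nonpos {p : ℤ} (hp : p ≤ 0) : hodgeFiltration H0 H2 p = ⊤ := by
  simp [hodgeFiltration, hp]

theorem hodgeFiltration_one : hodgeFiltration H0 H2 1 = H0 ⊔ H2 := by
  simp [hodgeFiltration]

theorem hodgeFiltration_le_of_two_le {p : ℤ} (hp : 2 ≤ p) : hodgeFiltration H0 H2 p ≤ H0 := by
  unfold hodgeFiltration
  split_ifs <;> first | omega | exact le_rfl | exact bot_le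

theorem le_hodgeFiltration_of_le_two {p : ℤ} (hp : p ≤ 2) : H0 ≤ hodgeFiltration H0 H2 p := by
  unfold hodgeFiltration
  split_ifs <;> first | omega | exact le_top | exact le_sup_left | exact le_rfl

theorem hodgeFiltration_of_three_le {p : ℤ} (hp : 3 ≤ p) : hodgeFiltration H0 H2 p = ⊥ := by
  rw [hodgeFiltration, if_neg (by omega), if_neg (by omega), if_neg (by omega)]

variable {τ : A →ₛₗ[starRingEnd ℂ] A}

theorem map_hodgeFiltration_of_nonpos (hτ : Function.Involutive τ) {q : ℤ} (hq : q ≤ 0) :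
    (hodgeFiltration H0 H2 q).map τ = ⊤ := by
  rw [hodgeFiltration_of_nonpos hq, Submodule.map_top, LinearMap.range_eq_top]
  exact hτ.surjective

theorem map_hodgeFiltration_le_of_two_le (hH0 : H0 = span ℂ {1}) {q : ℤ} (hq : 2 ≤ q) :
    (hodgeFiltration H0 H2 q).map τ ≤ span ℂ {τ 1} := by
  rw [← Set.image_singleton, ← map_span, ← hH0]
  exact map_mono (hodgeFiltration_le_of_two_le hq)

theorem span_le_map_hodgeFiltration_of_le_two (hH0 : H0 = span ℂ {1}) {q : ℤ} (hq : q ≤ 2) :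
    span ℂ {τ 1} ≤ (hodgeFiltration H0 H2 q).map τ := by
  rw [← Set.image_singleton, ← map_span, ← hH0]
  exact map_mono (le_hodgeFiltration_of_le_two hq)

theorem eq_zero_of_smul_one_mem (hH0 : H0 = span ℂ {1}) (hdisj0 : Disjoint H0 (H2 ⊔ H4))
    (hn2 : n * n ≠ 0) {c : ℂ} (hc : c • (1 : A) ∈ H2 ⊔ H4) : c = 0 := by
  have : Nontrivial A := nontrivial_of_ne _ _ hn2
  have h0 := disjoint_def.mp hdisj0 _ (hH0 ▸ smul_mem _ _ (mem_span_singleton_self 1)) hc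
  exact (smul_eq_zero.mp h0).resolve_right one_ne_zero

theorem eq_zero_of_smul_sq_mem (hH4 : H4 = span ℂ {n * n}) (hdisj4 : Disjoint (H0 ⊔ H2) H4)
    (hn2 : n * n ≠ 0) {c : ℂ} (hc : c • (n * n) ∈ H0 ⊔ H2) : c = 0 := by
  have h0 := disjoint_def.mp hdisj4 _ hc (hH4 ▸ smul_mem _ _ (mem_span_singleton_self _))
  exact (smul_eq_zero.mp h0).resolve_right hn2

theorem truncExp_sub_one_mem (hn : n ∈ H2) (hH4 : H4 = span ℂ {n * n}) (a : ℂ) :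
    truncExp n a - 1 ∈ H2 ⊔ H4 := by
  rw [truncExp, add_assoc, add_sub_cancel_left]
  exact add_mem (mem_sup_left (smul_mem _ _ hn))
    (mem_sup_right (hH4 ▸ smul_mem _ _ (mem_span_singleton_self _)))

theorem span_pair_le_sup (hn : n ∈ H2) (hH4 : H4 = span ℂ {n * n}) :
    span ℂ {n, n * n} ≤ H2 ⊔ H4 := by
  rw [Set.insert_eq, span_union, hH4]
  exact sup_le_sup_right ((span_singleton_le_iff_mem _ _).mpr hn) _

theorem opposedOn_weight_one (hH0 : H0 = span ℂ {1}) (hH4 : H4 = span ℂ {n * n})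
    (hn : n ∈ H2) (hn2 : n * n ≠ 0) (hdisj0 : Disjoint H0 (H2 ⊔ H4))
    (hdisj4 : Disjoint (H0 ⊔ H2) H4) (hτ : Function.Involutive τ)
    (hτ1 : τ 1 = truncExp n (2 * I)) (hτn : τ n = n + (2 * I) • (n * n)) {p q : ℤ}
    (hpq : p + q = 2) :
    OpposedOn (hodgeFiltration H0 H2 p) ((hodgeFiltration H0 H2 q).map τ)
      (span ℂ {n, n * n}) ⊥ := by
  have hV := span_pair_le_sup hn hH4
  rcases (by omega : p ≤ 0 ∨ p = 1 ∨ 2 ≤ p) with hp | rfl | hp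
  · refine .of_le_sup_left bot_le (by simp [hodgeFiltration_of_nonpos hp]) ?_
    rintro y ⟨⟨-, hyG⟩, hyV⟩
    obtain ⟨c, rfl⟩ := mem_span_singleton.mp (map_hodgeFiltration_le_of_two_le hH0 (by omega) hyG)
    have hc : c = 0 := by
      refine eq_zero_of_smul_one_mem hH0 hdisj0 hn2 ?_
      have := sub_mem (hV hyV) (smul_mem _ c (truncExp_sub_one_mem hn hH4 (2 * I)))
      rwa [hτ1, ← smul_sub, sub_sub_cancel] at this
    simp [hc]
  · obtain rfl : q = 1 := by omega
    rw [hodgeFiltration_one]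
    have hnF : n ∈ (H0 ⊔ H2) ⊓ span ℂ {n, n * n} :=
      ⟨mem_sup_right hn, subset_span (by simp)⟩
    have hτnG : τ n ∈ (H0 ⊔ H2).map τ ⊓ span ℂ {n, n * n} :=
      ⟨mem_map_of_mem hnF.1, hτn ▸ add_mem (subset_span (by simp))
        (smul_mem _ _ (subset_span (by simp)))⟩
    refine .of_le bot_le ?_ ?_
    · set T := (H0 ⊔ H2) ⊓ span ℂ {n, n * n} ⊔ (H0 ⊔ H2).map τ ⊓ span ℂ {n, n * n}
      have hnT : n ∈ T := mem_sup_left hnF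
      have hsqT : (2 * I) • (n * n) ∈ T := by
        rw [← add_sub_cancel_left n ((2 * I) • (n * n)), ← hτn]
        exact sub_mem (mem_sup_right hτnG) hnT
      rw [sup_bot_eq, span_le, Set.insert_subset_iff, Set.singleton_subset_iff]
      exact ⟨hnT, (smul_mem_iff T (by simp)).mp hsqT⟩
    · rintro y ⟨⟨hyF, hyG⟩, hyV⟩
      replace hyG := (mem_map_iff_of_involutive hτ).mp hyG
      obtain ⟨a, b, rfl⟩ := mem_span_pair.mp hyV
      obtain rfl : b = 0 := eq_zero_of_smul_sq_mem hH4 hdisj4 hn2 (by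
        simpa using sub_mem hyF (smul_mem _ a (mem_sup_right hn)))
      have ha : starRingEnd ℂ a * (2 * I) = 0 := eq_zero_of_smul_sq_mem hH4 hdisj4 hn2 (by
        simpa [hτn, smul_add, smul_smul] using
          sub_mem hyG (smul_mem _ (starRingEnd ℂ a) (mem_sup_right hn)))
      simp_all
  · refine .of_le_sup_right bot_le
      (by simp [map_hodgeFiltration_of_nonpos hτ (by omega : q ≤ 0)]) ?_
    rintro y ⟨⟨hyF, -⟩, hyV⟩
    exact (mem_bot ℂ).mpr
      (disjoint_def.mp hdisj0 y (hodgeFiltration_le_of_two_le hp hyF) (hV hyV))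

theorem opposedOn_weight_two (hH0 : H0 = span ℂ {1}) (hH4 : H4 = span ℂ {n * n})
    (hn : n ∈ H2) (hn2 : n * n ≠ 0) (hdisj0 : Disjoint H0 (H2 ⊔ H4))
    (hdisj4 : Disjoint (H0 ⊔ H2) H4) (hτ : Function.Involutive τ)
    (hτ1 : τ 1 = truncExp n (2 * I)) (hτH2 : ∀ x ∈ H2, τ x ∈ H2 ⊔ H4)
    (hτsq : τ (n * n) = n * n) {p q : ℤ} (hpq : p + q = 3) :
    OpposedOn (hodgeFiltration H0 H2 p) ((hodgeFiltration H0 H2 q).map τ) (H2 ⊔ H4)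
      (span ℂ {n, n * n}) := by
  have hV := span_pair_le_sup hn hH4
  have hH4V : H4 ≤ span ℂ {n, n * n} := by rw [hH4]; exact span_mono (by simp)
  rcases (by omega : p ≤ 0 ∨ p = 1 ∨ p = 2 ∨ 3 ≤ p) with hp | rfl | rfl | hp
  · refine .of_le_sup_left hV (by simp [hodgeFiltration_of_nonpos hp]) ?_
    simp [hodgeFiltration_of_three_le (by omega : 3 ≤ q)]
  · obtain rfl : q = 2 := by omega
    rw [hodgeFiltration_one]
    refine .of_le_sup_left hV (sup_le_sup le_sup_right hH4V) ?_
    rintro y ⟨⟨hyF, hyG⟩, -⟩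
    obtain ⟨c, rfl⟩ := mem_span_singleton.mp (map_hodgeFiltration_le_of_two_le hH0 le_rfl hyG)
    have h1 : (1 : A) + (2 * I) • n ∈ H0 ⊔ H2 :=
      add_mem (mem_sup_left (hH0 ▸ mem_span_singleton_self 1)) (mem_sup_right (smul_mem _ _ hn))
    have hc : c * (-2) = 0 := by
      refine eq_zero_of_smul_sq_mem hH4 hdisj4 hn2 ?_
      convert sub_mem hyF (smul_mem _ c h1) using 1
      rw [hτ1, truncExp]
      match_scalars <;> ring_nf; simp [I_sq]
    simp_all
  · obtain rfl : q = 1 := by omega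
    rw [hodgeFiltration_one]
    refine .of_le_sup_right hV (sup_le (fun x hx => ?_) (le_sup_of_le_right hH4V)) ?_
    · obtain ⟨y, hy, z, hz, hyz⟩ := mem_sup.mp (hτH2 x hx)
      obtain ⟨c, rfl⟩ := mem_span_singleton.mp (hH4 ▸ hz)
      rw [← hτ x, ← hyz, map_add, map_smulₛₗ, hτsq]
      exact add_mem (mem_sup_left (mem_map_of_mem (mem_sup_right hy)))
        (mem_sup_right (smul_mem _ _ (subset_span (by simp))))
    · rintro y ⟨⟨hyF, -⟩, hyV⟩
      rw [disjoint_def.mp hdisj0 y (hodgeFiltration_le_of_two_le le_rfl hyF) hyV]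
      exact zero_mem _
  · refine .of_le_sup_right hV
      (by simp [map_hodgeFiltration_of_nonpos hτ (by omega : q ≤ 0)]) ?_
    simp [hodgeFiltration_of_three_le hp]

theorem opposedOn_weight_four (hH0 : H0 = span ℂ {1}) (hH4 : H4 = span ℂ {n * n})
    (hn : n ∈ H2) (hsum : H0 ⊔ H2 ⊔ H4 = ⊤) (hτ1 : τ 1 = truncExp n (2 * I)) {p q : ℤ}
    (hpq : p + q = 5) :
    OpposedOn (hodgeFiltration H0 H2 p) ((hodgeFiltration H0 H2 q).map τ) ⊤ (H2 ⊔ H4) := by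
  rw [← hsum, sup_assoc]
  rcases (by omega : p ≤ 2 ∨ q ≤ 2) with hp | hq
  · refine .of_le_sup_left le_sup_right (sup_le_sup_right (le_hodgeFiltration_of_le_two hp) _) ?_
    simp [hodgeFiltration_of_three_le (by omega : 3 ≤ q)]
  · have h1 : H0 ≤ span ℂ {τ 1} ⊔ (H2 ⊔ H4) := by
      rw [hH0, span_singleton_le_iff_mem, hτ1]
      have := sub_mem (mem_sup_left (mem_span_singleton_self (truncExp n (2 * I))))
        (mem_sup_right (truncExp_sub_one_mem hn hH4 (2 * I)))
      rwa [sub_sub_cancel] at this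
    refine .of_le_sup_right le_sup_right (sup_le (h1.trans (sup_le_sup_right
      (span_le_map_hodgeFiltration_of_le_two hH0 hq) _)) le_sup_right) ?_
    simp [hodgeFiltration_of_three_le (by omega : 3 ≤ p)]

theorem opposedOn_weightFiltration (hH0 : H0 = span ℂ {1}) (hH4 : H4 = span ℂ {n * n})
    (hn : n ∈ H2) (hn2 : n * n ≠ 0) (hsum : H0 ⊔ H2 ⊔ H4 = ⊤)
    (hdisj0 : Disjoint H0 (H2 ⊔ H4)) (hdisj4 : Disjoint (H0 ⊔ H2) H4)
    (hτ : Function.Involutive τ) (hτ1 : τ 1 = truncExp n (2 * I))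
    (hτn : τ n = n + (2 * I) • (n * n)) (hτH2 : ∀ x ∈ H2, τ x ∈ H2 ⊔ H4)
    (hτsq : τ (n * n) = n * n) {k p q : ℤ} (hpq : p + q = k + 1) :
    OpposedOn (hodgeFiltration H0 H2 p) ((hodgeFiltration H0 H2 q).map τ)
      (weightFiltration H2 H4 n k) (weightFiltration H2 H4 n (k - 1)) := by
  rcases (by omega : k ≤ 0 ∨ k = 1 ∨ k = 2 ∨ k = 3 ∨ k = 4 ∨ 5 ≤ k)
    with hk | rfl | rfl | rfl | rfl | hk
  · rw [weightFiltration, if_pos hk, weightFiltration, if_pos (by omega)]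
    exact .self _ _ _
  · simpa [weightFiltration] using
      opposedOn_weight_one hH0 hH4 hn hn2 hdisj0 hdisj4 hτ hτ1 hτn (by omega)
  · simpa [weightFiltration] using
      opposedOn_weight_two hH0 hH4 hn hn2 hdisj0 hdisj4 hτ hτ1 hτH2 hτsq (by omega)
  · simpa [weightFiltration] using OpposedOn.self _ _ _
  · simpa [weightFiltration] using opposedOn_weight_four hH0 hH4 hn hsum hτ1 (by omega)
  · rw [weightFiltration, if_neg (by omega), if_neg (by omega), if_neg (by omega),
      weightFiltration, if_neg (by omega), if_neg (by omega), if_neg (by omega)]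
    exact .self _ _ _

/-- The weight filtration `𝒲_k` of the real form `A_ℝ = R e`, for `R` the real points and
`e = exp (√−1 n)`. -/
noncomputable def realWeightFiltration (R : Submodule ℝ A) (H2 : Submodule ℂ A) (n e : A)
    (k : ℤ) : Submodule ℝ A :=
  if k ≤ 0 then ⊥
  else if k = 1 then span ℝ {n + I • (n * n), n * n}
  else if k ≤ 3 then
    span ℝ {n + I • (n * n), n * n} ⊔ R ⊓ (primitivePart H2 n).restrictScalars ℝ
  else R.map ((LinearMap.mulRight ℂ e).restrictScalars ℝ)

variable (σ : A →ₛₗ[starRingEnd ℂ] A) {R : Submodule ℝ A}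

theorem span_realWeightFiltration (hσσ : ∀ x, σ (σ x) = x)
    (hσmul : ∀ x y, σ (x * y) = σ x * σ y) (hσn : σ n = n) (hσH2 : ∀ x ∈ H2, σ x ∈ H2)
    (hn : n * (n * n) = 0) (hR : ∀ x, x ∈ R ↔ σ x = x)
    (hlef : H2 = primitivePart H2 n ⊔ span ℂ {n}) (hH4 : H4 = span ℂ {n * n}) (k : ℤ) :
    span ℂ (realWeightFiltration R H2 n (truncExp n I) k : Set A)
      = weightFiltration H2 H4 n k := by
  unfold realWeightFiltration weightFiltration
  split_ifs
  · simp
  · rw [span_span_of_tower, span_pair_add_smul]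
  · rw [span_coe_sup, span_span_of_tower, span_pair_add_smul,
      span_fixedPoints_inf σ hσσ hR fun _ => map_mem_primitivePart σ hσmul hσn hσH2,
      Set.insert_eq, span_union, hH4]
    conv_rhs => rw [hlef]
    ac_rfl
  · have hRtop : span ℂ (R : Set A) = ⊤ := by
      simpa using span_fixedPoints_inf σ hσσ hR (S := ⊤) fun _ _ => trivial
    rw [map_coe, LinearMap.coe_restrictScalars, span_image, hRtop, Submodule.map_top,
      LinearMap.range_eq_top]
    refine fun y => ⟨y * truncExp n (-I), ?_⟩
    rw [LinearMap.mulRight_apply, mul_assoc, truncExp_mul_truncExp hn, neg_add_cancel,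
      truncExp_zero, mul_one]

theorem realWeightFiltration_le (hσmul : ∀ x y, σ (x * y) = σ x * σ y) (hσn : σ n = n)
    (hn : n * (n * n) = 0) (hR : ∀ x, x ∈ R ↔ σ x = x) (k : ℤ) :
    realWeightFiltration R H2 n (truncExp n I) k
      ≤ R.map ((LinearMap.mulRight ℂ (truncExp n I)).restrictScalars ℝ) := by
  have hmem : ∀ x, σ x = x → x * (n * n) = 0 →
      x + I • (x * n) ∈ R.map ((LinearMap.mulRight ℂ (truncExp n I)).restrictScalars ℝ) :=
    fun x hσx hx => ⟨x, (hR x).mpr hσx, mul_truncExp hx I⟩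
  have hspan : span ℝ {n + I • (n * n), n * n}
      ≤ R.map ((LinearMap.mulRight ℂ (truncExp n I)).restrictScalars ℝ) := by
    rw [span_le, Set.insert_subset_iff, Set.singleton_subset_iff]
    refine ⟨hmem n hσn hn, ?_⟩
    simpa [mul_assoc, hn] using
      hmem (n * n) (by rw [hσmul, hσn]) (by rw [mul_assoc, hn, mul_zero])
  unfold realWeightFiltration
  split_ifs
  · exact bot_le
  · exact hspan
  · refine sup_le hspan fun x ⟨hxR, hxP⟩ => ?_
    have hxn := (mem_primitivePart.mp hxP).2
    simpa [hxn] using hmem x ((hR x).mp hxR) (by rw [← mul_assoc, hxn, zero_mul])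
  · exact le_rfl

end Filtrations

end SurfaceMHS

open SurfaceMHS

theorem stmt11_general {A : Type*} [CommRing A] [Algebra ℂ A]
    (H0 H2 H4 : Submodule ℂ A)
    (hsum : H0 ⊔ H2 ⊔ H4 = ⊤)
    (hindep : ∀ a ∈ H0, ∀ x ∈ H2, ∀ y ∈ H4, a + x + y = 0 → a = 0 ∧ x = 0 ∧ y = 0)
    (hH0 : H0 = Submodule.span ℂ {(1 : A)})
    (hmul22 : ∀ x ∈ H2, ∀ y ∈ H2, x * y ∈ H4)
    (hmul24 : ∀ x ∈ H2, ∀ y ∈ H4, x * y = 0)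
    (intg : A →ₗ[ℂ] ℂ)
    (hint0 : ∀ x ∈ H0 ⊔ H2, intg x = 0)
    -- real structure
    (conj : A →ₗ[ℝ] A)
    (hcc : ∀ x, conj (conj x) = x)
    (hcm : ∀ x y, conj (x * y) = conj x * conj y)
    (hca : ∀ (z : ℂ) (x : A), conj (z • x) = (starRingEnd ℂ z) • conj x)
    (hc1 : conj 1 = 1)
    (hcH2 : ∀ x ∈ H2, conj x ∈ H2)
    -- the Kähler class
    (n : A) (hn : n ∈ H2) (hcn : conj n = n)
    (K : ℝ) (hK : intg (n * n) = (K : ℂ)) (hKpos : 0 < K)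
    (hH4 : H4 = Submodule.span ℂ {n * n})
    (hlef : H2 = (H2 ⊓ LinearMap.ker (LinearMap.mulRight ℂ n)) ⊔
      Submodule.span ℂ {n})
    -- the conditions h^{2,0}=h^{0,2}=0, b₁ even, K>0, via the Hodge index
    -- theorem: the intersection form is negative definite on H²_prim(X,ℝ)
    (hneg : ∀ x : A, conj x = x → x ∈ H2 → n * x = 0 → x ≠ 0 →
      (intg (x * x)).re < 0 ∧ (intg (x * x)).im = 0)
    -- the pairing (·,·)₀ of the nilpotent construction on I₀ = (n)
    (p0 : A →ₗ[ℂ] A →ₗ[ℂ] ℂ)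
    (hp0 : ∀ x y : A, p0 (n * x) (n * y) = intg (x * (n * y)))
    -- the Weil operator C (C = (√−1)^{p−q} on A^{p,q})
    (C : A →ₗ[ℂ] A)
    (hC10 : C n = Complex.I • n)
    (hC01 : C (n + (2 * Complex.I) • (n * n))
      = (-Complex.I) • (n + (2 * Complex.I) • (n * n))) :
    let expc : A := 1 + Complex.I • n - (1 / 2 : ℂ) • (n * n)
    let Rpts : Submodule ℝ A := LinearMap.ker (conj - LinearMap.id)
    let ARsub : Submodule ℝ A :=
      Submodule.map ((LinearMap.mulRight ℂ expc).restrictScalars ℝ) Rpts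
    let conjAR : A →ₗ[ℝ] A :=
      ((LinearMap.mulRight ℂ (expc * expc)).restrictScalars ℝ).comp conj
    let prim : Submodule ℂ A := H2 ⊓ LinearMap.ker (LinearMap.mulRight ℂ n)
    let primR : Submodule ℝ A := Rpts ⊓ prim.restrictScalars ℝ
    let W : ℤ → Submodule ℝ A := fun l =>
      if l ≤ 0 then ⊥
      else if l = 1 then Submodule.span ℝ {n + Complex.I • (n * n), n * n}
      else if l ≤ 3 then Submodule.span ℝ {n + Complex.I • (n * n), n * n} ⊔ primR
      else ARsub
    let F : ℤ → Submodule ℂ A := fun p =>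
      if p ≤ 0 then ⊤ else if p = 1 then H0 ⊔ H2 else if p = 2 then H0 else ⊥
    let WC : ℤ → Submodule ℂ A := fun l => Submodule.span ℂ (W l : Set A)
    -- Q₁ by the defining formula (k = 1)
    let Q1 : A → A → ℂ := fun x y =>
      (Complex.I / 2) * (p0 (C x) y - p0 x (C y))
    -- the explicit values of Q₁ and Q₄
    (Q1 (n * n) (n + Complex.I • (n * n)) = (K : ℂ)) ∧
    (Q1 (n + Complex.I • (n * n)) (n + Complex.I • (n * n)) = 0) ∧
    (Q1 (n * n) (n * n) = 0) ∧
    (intg ((1 : A) * ((1 : A) * n ^ 2)) = (K : ℂ)) ∧      -- Q₄(1,1) = K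
    -- in particular Q₂(x,y) = −∫ x∪y is positive definite on H²_prim(X,ℝ)
    (∀ x : A, conj x = x → x ∈ H2 → n * x = 0 → x ≠ 0 →
      0 < (-(intg (x * x))).re) ∧
    -- the Hermitian forms H_k(x,y) = Q_k(Cx, ȳ) are positive definite:
    -- H₁ on Gr₁ = 𝒲₁ ⊗ ℂ
    (∀ x : A, x ∈ WC 1 → x ≠ 0 →
      0 < (Q1 (C x) (conjAR x)).re ∧ (Q1 (C x) (conjAR x)).im = 0) ∧
    -- H₂ on Gr₂ = H²_prim(X,ℂ)
    (∀ x : A, x ∈ H2 → n * x = 0 → x ≠ 0 →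
      0 < (-(intg (x * conjAR x))).re ∧ (intg (x * conjAR x)).im = 0) ∧
    -- H₄ on Gr₄ = ℂ·1 (via (x,y)₃ = ⟨x̃, ỹ∘n²⟩)
    (∀ a : ℂ, a ≠ 0 →
      0 < (intg ((a • (1 : A)) * (conjAR (a • (1 : A)) * n ^ 2))).re ∧
        (intg ((a • (1 : A)) * (conjAR (a • (1 : A)) * n ^ 2))).im = 0) ∧
    -- and (𝒲_•, ℱ^•, Q_•) is a graded polarized ℝ-mixed Hodge structure:
    -- the mixed Hodge structure property (opposedness on each Gr_k^𝒲)
    (∀ l : ℤ, W l ≤ ARsub) ∧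
    (∀ k p q : ℤ, p + q = k + 1 →
      ((F p ⊓ WC k).restrictScalars ℝ ⊔
          (Submodule.map conjAR ((F q).restrictScalars ℝ) ⊓
            (WC k).restrictScalars ℝ) ⊔
          (WC (k - 1)).restrictScalars ℝ
        = (WC k).restrictScalars ℝ) ∧
      ((F p).restrictScalars ℝ ⊓
          Submodule.map conjAR ((F q).restrictScalars ℝ) ⊓
          (WC k).restrictScalars ℝ
        ≤ (WC (k - 1)).restrictScalars ℝ)) := by
  intro expc Rpts ARsub conjAR prim primR W F WC Q1
  let σ : A →ₛₗ[starRingEnd ℂ] A := { conj.toAddHom with map_smul' := hca }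
  have hn3 : n * (n * n) = 0 := hmul24 n hn _ (hmul22 n hn n hn)
  have hn2 : n * n ≠ 0 := fun h => hKpos.ne' (by simpa [h, eq_comm] using hK)
  have hR : ∀ x, x ∈ Rpts ↔ σ x = x := fun x => sub_eq_zero
  have hexpc : expc = truncExp n I := by
    simp only [expc, truncExp, I_sq]
    module
  have hτ : ∀ x, conjAR x = twistedConj σ (truncExp n (2 * I)) x := fun x => by
    rw [twistedConj_apply, two_mul, ← truncExp_mul_truncExp hn3, ← hexpc]
    rfl
  have hW : W = realWeightFiltration Rpts H2 n (truncExp n I) := by rw [← hexpc]; rfl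
  have hWC : WC = weightFiltration H2 H4 n := funext fun k => by
    rw [← span_realWeightFiltration σ hcc hcm hcn hcH2 hn3 hR hlef hH4 k, ← hW]
  have hpos : ∀ z : ℂ, 0 < z → 0 < z.re ∧ z.im = 0 := fun z h =>
    ⟨(pos_iff.mp h).1, (pos_iff.mp h).2.symm⟩
  have hC1 := weil_apply_add_I_smul_sq hC10 hC01
  have hC2 := weil_apply_sq hC10 hC01
  have hintn := hint0 n (mem_sup_right hn)
  have hQ1 : ∀ x y, Q1 x y = formQ₁ p0 C x y := fun _ _ => rfl
  have hQ := formQ₁_apply p0 C hn3 hintn hK hp0 hC1 hC2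
  refine ⟨?_, ?_, ?_, by rw [one_mul, one_mul, sq, hK],
    fun x h1 h2 h3 h4 => by simpa using (hneg x h1 h2 h3 h4).1,
    fun x hx hx0 => ?_, fun x hx hnx hx0 => ?_, fun a ha => ?_, fun k => ?_, fun k p q hpq => ?_⟩
  · rw [hQ1]; simpa using hQ 0 1 1 0
  · rw [hQ1]; simpa using hQ 1 0 1 0
  · rw [hQ1]; simpa using hQ 0 1 0 1
  · rw [hWC, weightFiltration, if_neg one_pos.not_ge, if_pos rfl,
      ← span_pair_add_smul n (n * n) I] at hx
    rw [hQ1, hτ]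
    exact hpos _ (formQ₁_weil_pos p0 C hn3 hintn hK hKpos hp0 hC1 hC2
      (twistedConj_truncExp_add_I_smul_sq σ hcm hcn hn3)
      (twistedConj_truncExp_sq σ hcm hcn hn3 _) hx hx0)
  · have h := neg_intg_mul_twistedConj_pos σ hcc hcm hcn hcH2
      (fun x h1 h2 h3 h4 => neg_iff.mpr (hneg x h1 h2 h3 h4)) hx hnx hx0 (2 * I)
    rw [← hτ] at h
    simpa using hpos _ h
  · rw [hτ, intg_smul_one_mul_twistedConj σ hc1 hn3 hK]
    exact hpos _ (zero_lt_real.mpr (mul_pos (normSq_pos.mpr ha) hKpos))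
  · rw [hW, show ARsub = Rpts.map ((LinearMap.mulRight ℂ (truncExp n I)).restrictScalars ℝ) by
      rw [← hexpc]]
    exact realWeightFiltration_le σ hcm hcn hn3 hR k
  · rw [hWC, map_restrictScalars_eq hτ]
    exact (opposedOn_weightFiltration hH0 hH4 hn hn2 hsum (disjoint_sup_right_of_indep hindep)
      (disjoint_sup_left_of_indep hindep)
      (twistedConj_truncExp_involutive σ hcc hcm hc1 hcn hn3 (by simp [map_ofNat]))
      (show conj 1 * _ = _ by rw [hc1, one_mul]) (twistedConj_truncExp_self σ hcn hn3 _)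
      (fun _ => twistedConj_truncExp_mem_sup σ hn hcH2 hmul22 hmul24 _)
      (twistedConj_truncExp_sq σ hcm hcn hn3 _) hpq).restrictScalars

/-- graded polarization: for a compact Kähler surface with
`h^{2,0} = h^{0,2} = 0`, `b₁` even and `K = ∫ n² > 0` — conditions which, by the
Hodge index theorem [BHPV IV.2.15], amount to the intersection form being
negative definite on `H²_prim(X,ℝ)` (hypothesis `hneg` below) — the forms
`Q_k(x,y) = ((√−1)^k/2){(Cx,y)_{k−1} + (−1)^k(x,Cy)_{k−1}}` polarize the mixed
Hodge structure `(𝒲_•, ℱ^•)` on `A_ℝ`: each Hermitian form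
`H_k(x,y) = Q_k(Cx, ȳ)` is positive definite (here `C` is the Weil operator and
`ȳ = conjAR y` the conjugation with respect to the real form `A_ℝ`); in
particular `Q₂(x,y) = −∫ x∪y` is positive definite on `H²_prim(X,ℝ)`, and the
explicit values are `Q₁(n², n+√−1n²) = K`, `Q₁(n+√−1n², n+√−1n²) =
Q₁(n²,n²) = 0`, `Q₄(1,1) = K`; moreover `(𝒲_•, ℱ^•, Q_•)` is a graded polarized
ℝ-mixed Hodge structure (the mixed Hodge structure property is restated as the
opposedness condition of STATEMENT 9). -/
theorem stmt11 {A : Type*} [CommRing A] [Algebra ℂ A] [FiniteDimensional ℂ A]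
    (H0 H2 H4 : Submodule ℂ A)
    (hsum : H0 ⊔ H2 ⊔ H4 = ⊤)
    (hindep : ∀ a ∈ H0, ∀ x ∈ H2, ∀ y ∈ H4, a + x + y = 0 → a = 0 ∧ x = 0 ∧ y = 0)
    (hH0 : H0 = Submodule.span ℂ {(1 : A)})
    (hmul22 : ∀ x ∈ H2, ∀ y ∈ H2, x * y ∈ H4)
    (hmul24 : ∀ x ∈ H2, ∀ y ∈ H4, x * y = 0)
    (hmul44 : ∀ x ∈ H4, ∀ y ∈ H4, x * y = 0)
    (intg : A →ₗ[ℂ] ℂ)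
    (hint0 : ∀ x ∈ H0 ⊔ H2, intg x = 0)
    (hnondeg : ∀ x : A, (∀ y : A, intg (x * y) = 0) → x = 0)
    -- real structure
    (conj : A →ₗ[ℝ] A)
    (hcc : ∀ x, conj (conj x) = x)
    (hcm : ∀ x y, conj (x * y) = conj x * conj y)
    (hca : ∀ (z : ℂ) (x : A), conj (z • x) = (starRingEnd ℂ z) • conj x)
    (hc1 : conj 1 = 1)
    (hcH0 : ∀ x ∈ H0, conj x ∈ H0)
    (hcH2 : ∀ x ∈ H2, conj x ∈ H2)
    (hcH4 : ∀ x ∈ H4, conj x ∈ H4)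
    -- the Kähler class
    (n : A) (hn : n ∈ H2) (hcn : conj n = n)
    (K : ℝ) (hK : intg (n * n) = (K : ℂ)) (hKpos : 0 < K)
    (hH4 : H4 = Submodule.span ℂ {n * n})
    (hlef : H2 = (H2 ⊓ LinearMap.ker (LinearMap.mulRight ℂ n)) ⊔
      Submodule.span ℂ {n})
    -- the conditions h^{2,0}=h^{0,2}=0, b₁ even, K>0, via the Hodge index
    -- theorem: the intersection form is negative definite on H²_prim(X,ℝ)
    (hneg : ∀ x : A, conj x = x → x ∈ H2 → n * x = 0 → x ≠ 0 →
      (intg (x * x)).re < 0 ∧ (intg (x * x)).im = 0)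
    -- the pairing (·,·)₀ of the nilpotent construction on I₀ = (n)
    (p0 : A →ₗ[ℂ] A →ₗ[ℂ] ℂ)
    (hp0 : ∀ x y : A, p0 (n * x) (n * y) = intg (x * (n * y)))
    -- the Weil operator C (C = (√−1)^{p−q} on A^{p,q})
    (C : A →ₗ[ℂ] A)
    (hC10 : C n = Complex.I • n)
    (hC01 : C (n + (2 * Complex.I) • (n * n))
      = (-Complex.I) • (n + (2 * Complex.I) • (n * n)))
    (hC11 : ∀ x : A, x ∈ H2 → n * x = 0 → C x = x)
    (hC22 : C 1 = 1) :
    let expc : A := 1 + Complex.I • n - (1 / 2 : ℂ) • (n * n)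
    let Rpts : Submodule ℝ A := LinearMap.ker (conj - LinearMap.id)
    let ARsub : Submodule ℝ A :=
      Submodule.map ((LinearMap.mulRight ℂ expc).restrictScalars ℝ) Rpts
    let conjAR : A →ₗ[ℝ] A :=
      ((LinearMap.mulRight ℂ (expc * expc)).restrictScalars ℝ).comp conj
    let prim : Submodule ℂ A := H2 ⊓ LinearMap.ker (LinearMap.mulRight ℂ n)
    let primR : Submodule ℝ A := Rpts ⊓ prim.restrictScalars ℝ
    let W : ℤ → Submodule ℝ A := fun l =>
      if l ≤ 0 then ⊥
      else if l = 1 then Submodule.span ℝ {n + Complex.I • (n * n), n * n}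
      else if l ≤ 3 then Submodule.span ℝ {n + Complex.I • (n * n), n * n} ⊔ primR
      else ARsub
    let F : ℤ → Submodule ℂ A := fun p =>
      if p ≤ 0 then ⊤ else if p = 1 then H0 ⊔ H2 else if p = 2 then H0 else ⊥
    let WC : ℤ → Submodule ℂ A := fun l => Submodule.span ℂ (W l : Set A)
    -- Q₁ by the defining formula (k = 1)
    let Q1 : A → A → ℂ := fun x y =>
      (Complex.I / 2) * (p0 (C x) y - p0 x (C y))
    -- the explicit values of Q₁ and Q₄
    (Q1 (n * n) (n + Complex.I • (n * n)) = (K : ℂ)) ∧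
    (Q1 (n + Complex.I • (n * n)) (n + Complex.I • (n * n)) = 0) ∧
    (Q1 (n * n) (n * n) = 0) ∧
    (intg ((1 : A) * ((1 : A) * n ^ 2)) = (K : ℂ)) ∧      -- Q₄(1,1) = K
    -- in particular Q₂(x,y) = −∫ x∪y is positive definite on H²_prim(X,ℝ)
    (∀ x : A, conj x = x → x ∈ H2 → n * x = 0 → x ≠ 0 →
      0 < (-(intg (x * x))).re) ∧
    -- the Hermitian forms H_k(x,y) = Q_k(Cx, ȳ) are positive definite:
    -- H₁ on Gr₁ = 𝒲₁ ⊗ ℂ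
    (∀ x : A, x ∈ WC 1 → x ≠ 0 →
      0 < (Q1 (C x) (conjAR x)).re ∧ (Q1 (C x) (conjAR x)).im = 0) ∧
    -- H₂ on Gr₂ = H²_prim(X,ℂ)
    (∀ x : A, x ∈ H2 → n * x = 0 → x ≠ 0 →
      0 < (-(intg (x * conjAR x))).re ∧ (intg (x * conjAR x)).im = 0) ∧
    -- H₄ on Gr₄ = ℂ·1 (via (x,y)₃ = ⟨x̃, ỹ∘n²⟩)
    (∀ a : ℂ, a ≠ 0 →
      0 < (intg ((a • (1 : A)) * (conjAR (a • (1 : A)) * n ^ 2))).re ∧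
        (intg ((a • (1 : A)) * (conjAR (a • (1 : A)) * n ^ 2))).im = 0) ∧
    -- and (𝒲_•, ℱ^•, Q_•) is a graded polarized ℝ-mixed Hodge structure:
    -- the mixed Hodge structure property (opposedness on each Gr_k^𝒲)
    (∀ l : ℤ, W l ≤ ARsub) ∧
    (∀ k p q : ℤ, p + q = k + 1 →
      ((F p ⊓ WC k).restrictScalars ℝ ⊔
          (Submodule.map conjAR ((F q).restrictScalars ℝ) ⊓
            (WC k).restrictScalars ℝ) ⊔
          (WC (k - 1)).restrictScalars ℝ
        = (WC k).restrictScalars ℝ) ∧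
      ((F p).restrictScalars ℝ ⊓
          Submodule.map conjAR ((F q).restrictScalars ℝ) ⊓
          (WC k).restrictScalars ℝ
        ≤ (WC (k - 1)).restrictScalars ℝ)) :=
  stmt11_general H0 H2 H4 hsum hindep hH0 hmul22 hmul24 intg hint0 conj hcc hcm hca hc1 hcH2 n hn
    hcn K hK hKpos hH4 hlef hneg p0 hp0 C hC10 hC01
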